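/- arXiv:2008.07053 — 4 statements merged into one kernel-verified Lean document; each statement's English description precedes it below -/
import Mathlib

section
/- Let ξ, ξ₁, ξ₂, ξ₃ be integers with ξ = ξ₁ + ξ₂ + ξ₃, |ξ| ≥ 1 and |ξ₁| ≥ |ξ₂| ≥ |ξ₃|. Set α₄ = ξ³ - ξ₁³ - ξ₂³ - ξ₃³. Then |ξ|⁻¹ α₄² ≤ C (|ξ₁|³|ξ₂|² + |ξ₁|²|ξ₂|²|ξ₃|²) for some absolute constant C. -/
lemma stmt8_aux (a b c : ℝ) (hA1 : 1 ≤ |a + b + c|) (hba : |b| ≤ |a|)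
    (hcb : |c| ≤ |b|) :
    |a + b + c|⁻¹ * ((a + b + c) ^ 3 - a ^ 3 - b ^ 3 - c ^ 3) ^ 2
      ≤ 864 * (|a| ^ 3 * b ^ 2 + a ^ 2 * b ^ 2 * c ^ 2) := by
  obtain ⟨x, hx⟩ : ∃ x : ℝ, x = a + b + c := ⟨_, rfl⟩
  rw [← hx]
  have hA0 : (0 : ℝ) < |x| := lt_of_lt_of_le one_pos (hx ▸ hA1)
  have hA1' : (1 : ℝ) ≤ |x| := hx ▸ hA1
  have hb2 : b ^ 2 ≤ a ^ 2 := by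
    nlinarith [sq_abs a, sq_abs b, abs_nonneg a, abs_nonneg b]
  have hc2b : c ^ 2 ≤ b ^ 2 := by
    nlinarith [sq_abs c, sq_abs b, abs_nonneg c, abs_nonneg b]
  have hc2a : c ^ 2 ≤ a ^ 2 := hc2b.trans hb2
  have hαeq : x ^ 3 - a ^ 3 - b ^ 3 - c ^ 3 = 3 * (x - c) * (b + c) * (a + c) := by
    rw [hx]; ring
  have h1' : (b + c) ^ 2 ≤ 4 * b ^ 2 := by nlinarith [sq_nonneg (b - c)]
  have h2' : (a + c) ^ 2 ≤ 4 * a ^ 2 := by nlinarith [sq_nonneg (a - c)]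
  have h3' : (x - c) ^ 2 ≤ 2 * x ^ 2 + 2 * c ^ 2 := by nlinarith [sq_nonneg (x + c)]
  have e1 : (x - c) ^ 2 * (b + c) ^ 2 ≤ (2 * x ^ 2 + 2 * c ^ 2) * (4 * b ^ 2) :=
    mul_le_mul h3' h1' (sq_nonneg _) (by positivity)
  have e2 : (x - c) ^ 2 * (b + c) ^ 2 * (a + c) ^ 2 ≤
      (2 * x ^ 2 + 2 * c ^ 2) * (4 * b ^ 2) * (4 * a ^ 2) :=
    mul_le_mul e1 h2' (sq_nonneg _) (by positivity)
  have key : (x ^ 3 - a ^ 3 - b ^ 3 - c ^ 3) ^ 2 ≤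
      288 * a ^ 2 * b ^ 2 * x ^ 2 + 288 * a ^ 2 * b ^ 2 * c ^ 2 := by
    have h9 : (x ^ 3 - a ^ 3 - b ^ 3 - c ^ 3) ^ 2 =
        9 * ((x - c) ^ 2 * (b + c) ^ 2 * (a + c) ^ 2) := by rw [hαeq]; ring
    have hrr : 9 * ((2 * x ^ 2 + 2 * c ^ 2) * (4 * b ^ 2) * (4 * a ^ 2)) =
        288 * a ^ 2 * b ^ 2 * x ^ 2 + 288 * a ^ 2 * b ^ 2 * c ^ 2 := by ring
    linarith [mul_le_mul_of_nonneg_left e2 (by norm_num : (0:ℝ) ≤ 9)]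
  have hA3 : |x| ≤ 3 * |a| := by
    calc |x| = |a + b + c| := by rw [hx]
      _ ≤ |a + b| + |c| := abs_add_le _ _
      _ ≤ |a| + |b| + |c| := by linarith [abs_add_le a b]
      _ ≤ 3 * |a| := by linarith [hcb.trans hba]
  have hAx : |x| ^ 2 = x ^ 2 := sq_abs x
  have hgoal : (x ^ 3 - a ^ 3 - b ^ 3 - c ^ 3) ^ 2 ≤
      |x| * (864 * (|a| ^ 3 * b ^ 2 + a ^ 2 * b ^ 2 * c ^ 2)) := by
    have t1 : 288 * a ^ 2 * b ^ 2 * x ^ 2 ≤ 864 * (|x| * (|a| * a ^ 2 * b ^ 2)) := by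
      have hAA : |x| * |x| ≤ 3 * |a| * |x| := mul_le_mul_of_nonneg_right hA3 (abs_nonneg x)
      have h5 : a ^ 2 * b ^ 2 * (|x| * |x|) ≤ a ^ 2 * b ^ 2 * (3 * |a| * |x|) :=
        mul_le_mul_of_nonneg_left hAA (by positivity)
      have h6 : a ^ 2 * b ^ 2 * (|x| * |x|) = a ^ 2 * b ^ 2 * x ^ 2 := by
        rw [← hAx]; ring
      have h7 : 288 * (a ^ 2 * b ^ 2 * (3 * |a| * |x|)) =
          864 * (|x| * (|a| * a ^ 2 * b ^ 2)) := by ring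
      linarith [h5, h6, h7]
    have t2 : 288 * a ^ 2 * b ^ 2 * c ^ 2 ≤ 864 * (|x| * (a ^ 2 * b ^ 2 * c ^ 2)) := by
      have h8 : 1 * (a ^ 2 * b ^ 2 * c ^ 2) ≤ |x| * (a ^ 2 * b ^ 2 * c ^ 2) :=
        mul_le_mul_of_nonneg_right hA1' (by positivity)
      have h8' : 0 ≤ |x| * (a ^ 2 * b ^ 2 * c ^ 2) :=
        mul_nonneg (abs_nonneg x) (by positivity)
      linarith [h8, h8']
    have habs3 : |a| ^ 3 = |a| * a ^ 2 := by rw [pow_succ' |a|, sq_abs]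
    calc (x ^ 3 - a ^ 3 - b ^ 3 - c ^ 3) ^ 2
        ≤ 288 * a ^ 2 * b ^ 2 * x ^ 2 + 288 * a ^ 2 * b ^ 2 * c ^ 2 := key
      _ ≤ 864 * (|x| * (|a| * a ^ 2 * b ^ 2)) + 864 * (|x| * (a ^ 2 * b ^ 2 * c ^ 2)) := by
          linarith
      _ = |x| * (864 * (|a| ^ 3 * b ^ 2 + a ^ 2 * b ^ 2 * c ^ 2)) := by rw [habs3]; ring
  rw [inv_mul_le_iff₀ hA0]
  exact hgoal

theorem stmt8 : ∃ C : ℝ, 0 < C ∧ ∀ ξ ξ₁ ξ₂ ξ₃ : ℤ, ξ = ξ₁ + ξ₂ + ξ₃ →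
    1 ≤ |ξ| → |ξ₂| ≤ |ξ₁| → |ξ₃| ≤ |ξ₂| →
    ((|ξ| : ℝ))⁻¹ * ((ξ ^ 3 - ξ₁ ^ 3 - ξ₂ ^ 3 - ξ₃ ^ 3 : ℤ) : ℝ) ^ 2
      ≤ C * ((|ξ₁| : ℝ) ^ 3 * (ξ₂ : ℝ) ^ 2 + (ξ₁ : ℝ) ^ 2 * (ξ₂ : ℝ) ^ 2 * (ξ₃ : ℝ) ^ 2) := by
  refine ⟨864, by norm_num, ?_⟩
  intro ξ ξ₁ ξ₂ ξ₃ hsum h1 h21 h32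
  subst hsum
  have hA1 : (1 : ℝ) ≤ |(ξ₁ : ℝ) + (ξ₂ : ℝ) + (ξ₃ : ℝ)| := by
    have : ((1 : ℤ) : ℝ) ≤ ((|ξ₁ + ξ₂ + ξ₃| : ℤ) : ℝ) := by exact_mod_cast h1
    push_cast at this
    linarith
  have hba : |(ξ₂ : ℝ)| ≤ |(ξ₁ : ℝ)| := by
    have : ((|ξ₂| : ℤ) : ℝ) ≤ ((|ξ₁| : ℤ) : ℝ) := by exact_mod_cast h21
    push_cast at this
    linarith
  have hcb : |(ξ₃ : ℝ)| ≤ |(ξ₂ : ℝ)| := by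
    have : ((|ξ₃| : ℤ) : ℝ) ≤ ((|ξ₂| : ℤ) : ℝ) := by exact_mod_cast h32
    push_cast at this
    linarith
  have := stmt8_aux (ξ₁ : ℝ) (ξ₂ : ℝ) (ξ₃ : ℝ) hA1 hba hcb
  push_cast
  convert this using 2 <;> push_cast <;> ring
end

section
/- For all reals x and y and every γ ≥ 0, |⟨x⟩^γ x - ⟨y⟩^γ y| ≤ C |x - y| (⟨y⟩^γ + ⟨x - y⟩^γ) for some constant C depending only on γ, where ⟨x⟩ = (1 + x²)^{1/2}. -/
/-!
The function `f t = ⟨t⟩ ^ γ * t` has derivative `⟨t⟩ ^ γ * (1 + γ t² / ⟨t⟩²)`, which is at most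
`(1 + γ) ⟨t⟩ ^ γ`. By the mean value theorem it suffices to bound `⟨t⟩ ^ γ` for `t` between `x` and
`y`, and there `⟨t⟩ ≤ ⟨y⟩ + |t - y| ≤ ⟨y⟩ + ⟨x - y⟩`, so `⟨t⟩ ^ γ ≤ 2 ^ γ (⟨y⟩ ^ γ + ⟨x - y⟩ ^ γ)`.
-/

open Set

namespace Real

lemma add_rpow_le_two_rpow_mul_rpow_add_rpow {p a b : ℝ} (ha : 0 ≤ a) (hb : 0 ≤ b) (hp : 0 ≤ p) :
    (a + b) ^ p ≤ 2 ^ p * (a ^ p + b ^ p) := calc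
  (a + b) ^ p ≤ (2 * max a b) ^ p := by
    rw [two_mul]; gcongr; exacts [le_max_left a b, le_max_right a b]
  _ = 2 ^ p * max a b ^ p := mul_rpow zero_le_two (ha.trans (le_max_left a b))
  _ ≤ 2 ^ p * (a ^ p + b ^ p) := by
    gcongr
    rcases le_total a b with h | h
    · rw [max_eq_right h]; exact le_add_of_nonneg_left (rpow_nonneg ha p)
    · rw [max_eq_left h]; exact le_add_of_nonneg_right (rpow_nonneg hb p)

noncomputable def japaneseBracket (x : ℝ) : ℝ := √(1 + x ^ 2)

lemma japaneseBracket_pos (x : ℝ) : 0 < japaneseBracket x := sqrt_pos.2 (by positivity)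

lemma sq_japaneseBracket (x : ℝ) : japaneseBracket x ^ 2 = 1 + x ^ 2 := sq_sqrt (by positivity)

lemma abs_le_japaneseBracket (x : ℝ) : |x| ≤ japaneseBracket x := by
  rw [← sqrt_sq_eq_abs]
  exact sqrt_le_sqrt (by linarith)

lemma japaneseBracket_add_le (x y : ℝ) : japaneseBracket (x + y) ≤ japaneseBracket x + |y| := by
  have hx := abs_le_japaneseBracket x
  have hxy : x * y ≤ japaneseBracket x * |y| :=
    (le_abs_self _).trans (by rw [abs_mul]; gcongr)
  rw [japaneseBracket, sqrt_le_left (by linarith [abs_nonneg x, abs_nonneg y])]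
  nlinarith [sq_japaneseBracket x, sq_abs y]

lemma japaneseBracket_le_of_mem_uIcc {x y t : ℝ} (ht : t ∈ uIcc x y) :
    japaneseBracket t ≤ japaneseBracket y + japaneseBracket (x - y) := by
  have hty : |t - y| ≤ |x - y| := abs_sub_left_of_mem_uIcc (uIcc_comm x y ▸ ht)
  calc japaneseBracket t = japaneseBracket (y + (t - y)) := by rw [add_sub_cancel]
    _ ≤ japaneseBracket y + |t - y| := japaneseBracket_add_le y (t - y)
    _ ≤ japaneseBracket y + japaneseBracket (x - y) := by
        gcongr; exact hty.trans (abs_le_japaneseBracket _)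

lemma hasDerivAt_japaneseBracket (t : ℝ) :
    HasDerivAt japaneseBracket (t / japaneseBracket t) t := by
  have h := ((hasDerivAt_pow 2 t).const_add 1).sqrt (by positivity)
  refine h.congr_deriv ?_
  simp only [japaneseBracket]
  ring

lemma hasDerivAt_japaneseBracket_rpow_mul_self (γ t : ℝ) :
    HasDerivAt (fun s => japaneseBracket s ^ γ * s)
      (japaneseBracket t ^ γ * (1 + γ * t ^ 2 / (1 + t ^ 2))) t := by
  have hpos := japaneseBracket_pos t
  have h := ((hasDerivAt_japaneseBracket t).rpow_const (p := γ) (Or.inl hpos.ne')).mul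
    (hasDerivAt_id' t)
  refine h.congr_deriv ?_
  rw [rpow_sub_one hpos.ne', ← sq_japaneseBracket t]
  field_simp
  ring

lemma japaneseBracket_rpow_mul_deriv_le {γ : ℝ} (hγ : 0 ≤ γ) (t : ℝ) :
    |japaneseBracket t ^ γ * (1 + γ * t ^ 2 / (1 + t ^ 2))| ≤ (γ + 1) * japaneseBracket t ^ γ := by
  have hfrac : t ^ 2 / (1 + t ^ 2) ≤ 1 := div_le_one_of_le₀ (by linarith) (by positivity)
  have hnn : 0 ≤ γ * t ^ 2 / (1 + t ^ 2) := by positivity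
  have hpow : 0 ≤ japaneseBracket t ^ γ := rpow_nonneg (japaneseBracket_pos t).le γ
  rw [abs_of_nonneg (by positivity), mul_comm]
  refine mul_le_mul_of_nonneg_right ?_ hpow
  rw [mul_div_assoc]
  nlinarith

lemma abs_japaneseBracket_rpow_mul_self_sub_le {γ : ℝ} (hγ : 0 ≤ γ) (x y : ℝ) :
    |japaneseBracket x ^ γ * x - japaneseBracket y ^ γ * y| ≤
      (γ + 1) * 2 ^ γ * |x - y| * (japaneseBracket y ^ γ + japaneseBracket (x - y) ^ γ) := by
  have hderiv_le : ∀ t ∈ uIcc x y,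
      ‖japaneseBracket t ^ γ * (1 + γ * t ^ 2 / (1 + t ^ 2))‖ ≤
        (γ + 1) * 2 ^ γ * (japaneseBracket y ^ γ + japaneseBracket (x - y) ^ γ) := by
    intro t ht
    calc _ ≤ (γ + 1) * japaneseBracket t ^ γ := japaneseBracket_rpow_mul_deriv_le hγ t
      _ ≤ (γ + 1) * (japaneseBracket y + japaneseBracket (x - y)) ^ γ := by
          gcongr
          · exact (japaneseBracket_pos t).le
          · exact japaneseBracket_le_of_mem_uIcc ht
      _ ≤ _ := by
          rw [mul_assoc]
          gcongr
          exact add_rpow_le_two_rpow_mul_rpow_add_rpow (japaneseBracket_pos y).le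
            (japaneseBracket_pos _).le hγ
  have hmvt := (convex_uIcc x y).norm_image_sub_le_of_norm_hasDerivWithin_le
    (fun t _ => (hasDerivAt_japaneseBracket_rpow_mul_self γ t).hasDerivWithinAt) hderiv_le
    right_mem_uIcc left_mem_uIcc
  simpa only [norm_eq_abs, mul_right_comm _ |x - y|] using hmvt

end Real

theorem stmt9 (γ : ℝ) (hγ : 0 ≤ γ) : ∃ C : ℝ, 0 < C ∧ ∀ x y : ℝ,
    |Real.sqrt (1 + x ^ 2) ^ γ * x - Real.sqrt (1 + y ^ 2) ^ γ * y|
      ≤ C * |x - y| * (Real.sqrt (1 + y ^ 2) ^ γ + Real.sqrt (1 + (x - y) ^ 2) ^ γ) :=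
  ⟨(γ + 1) * 2 ^ γ, by positivity, Real.abs_japaneseBracket_rpow_mul_self_sub_le hγ⟩
end

section
/- Suppose nonnegative reals (eₙ) satisfy e₀ = 0 and e_{n+1} ≤ C₁τ² + (1 + C₂τ + C₃√τ eₙ + C₄τ eₙ⁴) eₙ for all 0 ≤ n ≤ N-1, where C₁,...,C₄, τ > 0 and Nτ ≤ T. Then there exists τ₀ > 0 depending only on T and C₁,...,C₄ such that for all 0 < τ ≤ τ₀ and all 0 ≤ n ≤ N, eₙ ≤ C₁τ² Σ_{j=0}^{n} (1 + 2C₂τ)^j ≤ 2C₁C₂⁻¹ e^{2C₂T} τ. -/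
set_option maxHeartbeats 800000


theorem stmt11 (T C₁ C₂ C₃ C₄ : ℝ) (hT : 0 < T) (hC₁ : 0 < C₁) (hC₂ : 0 < C₂)
    (hC₃ : 0 < C₃) (hC₄ : 0 < C₄) :
    ∃ τ₀ : ℝ, 0 < τ₀ ∧ ∀ (τ : ℝ) (N : ℕ) (e : ℕ → ℝ), 0 < τ → τ ≤ τ₀ →
      (N : ℝ) * τ ≤ T → (∀ n, 0 ≤ e n) → e 0 = 0 →
      (∀ n < N, e (n + 1) ≤ C₁ * τ ^ 2
        + (1 + C₂ * τ + C₃ * Real.sqrt τ * e n + C₄ * τ * e n ^ 4) * e n) →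
      ∀ n ≤ N, e n ≤ C₁ * τ ^ 2 * ∑ j ∈ Finset.range (n + 1), (1 + 2 * C₂ * τ) ^ j ∧
        e n ≤ 2 * C₁ * C₂⁻¹ * Real.exp (2 * C₂ * T) * τ := by
  set C₅ := 2 * C₁ * C₂⁻¹ * Real.exp (2 * C₂ * T) with hC₅def
  have hE : 0 < Real.exp (2 * C₂ * T) := Real.exp_pos _
  have hC₅ : 0 < C₅ := by positivity
  set a := C₂ / (2 * C₃ * C₅) with hadef
  have ha0 : 0 < a := by positivity
  refine ⟨min (min 1 (1 / (2 * C₂))) (min (a ^ 2) (C₂ / (2 * C₄ * C₅ ^ 4))),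
    by positivity, ?_⟩
  intro τ N e hτ hττ₀ hNT he0 hE0 hrec
  have hτ1 : τ ≤ 1 := hττ₀.trans ((min_le_left _ _).trans (min_le_left _ _))
  have hτC2 : τ ≤ 1 / (2 * C₂) := hττ₀.trans ((min_le_left _ _).trans (min_le_right _ _))
  have hτa : τ ≤ a ^ 2 := hττ₀.trans ((min_le_right _ _).trans (min_le_left _ _))
  have hτ4 : τ ≤ C₂ / (2 * C₄ * C₅ ^ 4) :=
    hττ₀.trans ((min_le_right _ _).trans (min_le_right _ _))
  have hτC2' : 2 * C₂ * τ ≤ 1 := by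
    rw [le_div_iff₀ (by positivity)] at hτC2; linarith
  have hτmul : C₄ * C₅ ^ 4 * τ ≤ C₂ / 2 := by
    rw [le_div_iff₀ (by positivity)] at hτ4; nlinarith
  set r := 1 + 2 * C₂ * τ with hrdef
  have hr1 : 1 < r := by nlinarith
  have hr0 : 0 < r := by linarith
  set S : ℕ → ℝ := fun n => C₁ * τ ^ 2 * ∑ j ∈ Finset.range (n + 1), r ^ j with hSdef
  have hSbound : ∀ n ≤ N, S n ≤ C₅ * τ := by
    intro n hn
    have hgeo : ∑ j ∈ Finset.range (n + 1), r ^ j = (r ^ (n + 1) - 1) / (r - 1) :=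
      geom_sum_eq (ne_of_gt hr1) _
    have hrexp : r ^ (n + 1) ≤ Real.exp (2 * C₂ * τ * (n + 1)) := by
      calc r ^ (n + 1) ≤ (Real.exp (2 * C₂ * τ)) ^ (n + 1) := by
            apply pow_le_pow_left₀ hr0.le
            have := Real.add_one_le_exp (2 * C₂ * τ)
            linarith
        _ = Real.exp (2 * C₂ * τ * (n + 1)) := by
            rw [← Real.exp_nat_mul]; push_cast; ring_nf
    have hnN : (n : ℝ) ≤ (N : ℝ) := Nat.cast_le.mpr hn
    have harg : 2 * C₂ * τ * (n + 1) ≤ 2 * C₂ * T + 1 := by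
      have h1 : τ * (n : ℝ) ≤ τ * (N : ℝ) := mul_le_mul_of_nonneg_left hnN hτ.le
      have h2 : τ * (N : ℝ) ≤ T := by linarith [hNT]
      have h3 : 2 * C₂ * (τ * (n : ℝ)) ≤ 2 * C₂ * T := by
        apply mul_le_mul_of_nonneg_left (h1.trans h2) (by positivity)
      nlinarith
    have hrexp2 : r ^ (n + 1) ≤ 3 * Real.exp (2 * C₂ * T) := by
      calc r ^ (n + 1) ≤ Real.exp (2 * C₂ * τ * (n + 1)) := hrexp
        _ ≤ Real.exp (2 * C₂ * T + 1) := Real.exp_le_exp.mpr harg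
        _ = Real.exp (2 * C₂ * T) * Real.exp 1 := Real.exp_add _ _
        _ ≤ 3 * Real.exp (2 * C₂ * T) := by
            have h3 : Real.exp 1 ≤ 3 := Real.exp_one_lt_d9.le.trans (by norm_num)
            nlinarith [hE]
    have hCC : C₂ * C₅ = 2 * C₁ * Real.exp (2 * C₂ * T) := by
      rw [hC₅def]; field_simp
    have heq : S n = C₁ * τ * (r ^ (n + 1) - 1) / (2 * C₂) := by
      rw [hSdef]
      simp only
      rw [hgeo, show r - 1 = 2 * C₂ * τ by rw [hrdef]; ring]
      field_simp
    rw [heq, div_le_iff₀ (by positivity)]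
    have h5 : C₁ * τ * r ^ (n + 1) ≤ C₁ * τ * (3 * Real.exp (2 * C₂ * T)) :=
      mul_le_mul_of_nonneg_left hrexp2 (by positivity)
    have h6 : τ * (C₂ * C₅) = τ * (2 * C₁ * Real.exp (2 * C₂ * T)) := by rw [hCC]
    linarith [h5, h6, mul_pos hC₁ hτ, mul_pos (mul_pos hC₁ hτ) hE]
  have main : ∀ n ≤ N, e n ≤ S n := by
    intro n hn
    induction n with
    | zero =>
        rw [hE0, hSdef]
        simp only [zero_add, Finset.range_one, Finset.sum_singleton, pow_zero, mul_one]
        positivity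
    | succ n ih =>
        have hn' : n ≤ N := Nat.le_of_succ_le hn
        have ihn : e n ≤ S n := ih hn'
        have h1 : e n ≤ C₅ * τ := ihn.trans (hSbound n hn')
        have hen : 0 ≤ e n := he0 n
        have hsqrt : Real.sqrt τ ≤ a := by
          rw [show a = Real.sqrt (a ^ 2) from (Real.sqrt_sq ha0.le).symm]
          exact Real.sqrt_le_sqrt hτa
        have hs0 : 0 ≤ Real.sqrt τ := Real.sqrt_nonneg τ
        have hterm1 : C₃ * Real.sqrt τ * e n ≤ C₂ / 2 * τ := by
          have h2 : C₃ * Real.sqrt τ * e n ≤ C₃ * a * (C₅ * τ) := by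
            apply mul_le_mul _ h1 hen (by positivity)
            exact mul_le_mul_of_nonneg_left hsqrt hC₃.le
          have heq : C₃ * a * (C₅ * τ) = C₂ / 2 * τ := by
            rw [hadef]; field_simp
          linarith [h2, heq.le]
        have hτ4' : τ ^ 4 ≤ τ := by nlinarith [pow_le_one₀ hτ.le hτ1 (n := 3), pow_nonneg hτ.le 3]
        have hterm2 : C₄ * τ * e n ^ 4 ≤ C₂ / 2 * τ := by
          have e4 : e n ^ 4 ≤ C₅ ^ 4 * τ ^ 4 := by
            have := pow_le_pow_left₀ hen h1 4
            calc e n ^ 4 ≤ (C₅ * τ) ^ 4 := this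
              _ = C₅ ^ 4 * τ ^ 4 := by ring
          have h2a : C₄ * τ * e n ^ 4 ≤ C₄ * τ * (C₅ ^ 4 * τ ^ 4) :=
            mul_le_mul_of_nonneg_left e4 (by positivity)
          have h2b : C₄ * τ * (C₅ ^ 4 * τ ^ 4) ≤ C₄ * τ * (C₅ ^ 4 * τ) := by
            apply mul_le_mul_of_nonneg_left _ (by positivity)
            exact mul_le_mul_of_nonneg_left hτ4' (by positivity)
          have h2c : C₄ * τ * (C₅ ^ 4 * τ) ≤ C₂ / 2 * τ := by
            nlinarith [mul_le_mul_of_nonneg_right hτmul hτ.le]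
          linarith
        have hstep : e (n + 1) ≤ C₁ * τ ^ 2 + r * e n := by
          have hr := hrec n (by omega)
          have hmul : (1 + C₂ * τ + C₃ * Real.sqrt τ * e n + C₄ * τ * e n ^ 4) * e n
              ≤ r * e n := by
            apply mul_le_mul_of_nonneg_right _ hen
            rw [hrdef]; linarith
          linarith
        have hSsucc : S (n + 1) = C₁ * τ ^ 2 + r * S n := by
          rw [hSdef]
          simp only
          rw [geom_sum_succ]
          ring
        have hmono : r * e n ≤ r * S n := mul_le_mul_of_nonneg_left ihn hr0.le
        linarith [hstep, hSsucc.ge, hSsucc.le]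
  intro n hn
  exact ⟨main n hn, (main n hn).trans (hSbound n hn)⟩
end

section
/- Let γ ≥ 0 and γ₁ > 1/2. There is a constant C such that for all f ∈ H^γ(𝕋) ∩ H^{γ₁}(𝕋) and g ∈ H^{γ+1}(𝕋) ∩ H^{γ₁+1}(𝕋), the commutator satisfies ‖[J^γ ∂ₓ, g] f‖_{L²} ≤ C (‖f‖_{H^γ} ‖g‖_{H^{γ₁+1}} + ‖f‖_{H^{γ₁}} ‖g‖_{H^{γ+1}}), where J^γ = (1 - ∂ₓₓ)^{γ/2} and [A, B] = AB - BA. -/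
/-!
On the Fourier side the `ξ`-th coefficient of `[J^γ ∂ₓ, g] f` is
`i ∑_{ξ₁ + ξ₂ = ξ} (⟨ξ⟩^γ ξ - ⟨ξ₁⟩^γ ξ₁) f̂(ξ₁) ĝ(ξ₂)`. By the mean value theorem the symbol is at
most `(1 + γ) 2^γ |ξ₂| (⟨ξ₁⟩^γ + ⟨ξ₂⟩^γ)`, so the coefficient is dominated by the convolutions
`(⟨·⟩^γ |f̂|) ∗ (|·| |ĝ|) + |f̂| ∗ (|·| ⟨·⟩^γ |ĝ|)`. Young's inequality `ℓ² ∗ ℓ¹ ⊂ ℓ²` bounds each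
term with the factor carrying `⟨·⟩^γ` in `ℓ²`; the other factor is in `ℓ¹` by Cauchy–Schwarz
against `⟨n⟩^{-γ₁} ∈ ℓ²`, which is where `γ₁ > 1/2` enters.
-/

open MeasureTheory

noncomputable section

instance : Fact (0 < 2 * Real.pi) := ⟨by positivity⟩

/-- Japanese bracket `⟨ξ⟩^γ = (1 + ξ²)^{γ/2}`, the symbol of `J^γ = (1-∂ₓₓ)^{γ/2}`. -/
def jb (γ : ℝ) (ξ : ℤ) : ℝ := (1 + (ξ : ℝ) ^ 2) ^ (γ / 2)

/-- The `H^γ(𝕋)` norm `‖f‖_{H^γ} = ‖⟨ξ⟩^γ f̂(ξ)‖_{ℓ²}`. -/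
def hnorm (γ : ℝ) (f : AddCircle (2 * Real.pi) → ℂ) : ℝ :=
  Real.sqrt (∑' n : ℤ, (1 + (n : ℝ) ^ 2) ^ γ * ‖fourierCoeff f n‖ ^ 2)

/-- `f ∈ H^γ(𝕋)`. -/
def memH (γ : ℝ) (f : AddCircle (2 * Real.pi) → ℂ) : Prop :=
  Integrable f AddCircle.haarAddCircle ∧
    Summable fun n : ℤ => (1 + (n : ℝ) ^ 2) ^ γ * ‖fourierCoeff f n‖ ^ 2

section SymbolBound

variable {γ : ℝ}

theorem hasDerivAt_one_add_sq_rpow_mul_self (γ t : ℝ) :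
    HasDerivAt (fun t : ℝ => (1 + t ^ 2) ^ (γ / 2) * t)
      ((1 + t ^ 2) ^ (γ / 2) + γ * t ^ 2 * (1 + t ^ 2) ^ (γ / 2 - 1)) t := by
  have hpos : (1 + t ^ 2) ≠ 0 := by positivity
  have h := (((hasDerivAt_pow 2 t).const_add 1).rpow_const (p := γ / 2) (.inl hpos)).mul
    (hasDerivAt_id t)
  exact h.congr_deriv (by norm_num; ring)

theorem one_add_sq_rpow_deriv_le (hγ : 0 ≤ γ) (t : ℝ) :
    |(1 + t ^ 2) ^ (γ / 2) + γ * t ^ 2 * (1 + t ^ 2) ^ (γ / 2 - 1)|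
      ≤ (1 + γ) * (1 + t ^ 2) ^ (γ / 2) := by
  have hpos : 0 < 1 + t ^ 2 := by positivity
  have hsplit : (1 + t ^ 2) ^ (γ / 2) = (1 + t ^ 2) ^ (γ / 2 - 1) * (1 + t ^ 2) := by
    rw [← Real.rpow_add_one hpos.ne']
    ring_nf
  have hr : 0 ≤ (1 + t ^ 2) ^ (γ / 2 - 1) := Real.rpow_nonneg hpos.le _
  rw [abs_of_nonneg (by positivity), hsplit]
  nlinarith [mul_nonneg (mul_nonneg hγ hr) (zero_le_one (α := ℝ))]

theorem one_add_sq_rpow_le_of_abs_le (hγ : 0 ≤ γ) {t x y : ℝ} (ht : |t| ≤ |x| + |y|) :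
    (1 + t ^ 2) ^ (γ / 2) ≤ 2 ^ γ * ((1 + x ^ 2) ^ (γ / 2) + (1 + y ^ 2) ^ (γ / 2)) := by
  wlog hxy : |x| ≤ |y| generalizing x y
  · rw [add_comm ((1 + x ^ 2) ^ (γ / 2))]
    exact this (by linarith) (le_of_not_ge hxy)
  have ht2 : 1 + t ^ 2 ≤ 4 * (1 + y ^ 2) := by
    nlinarith [sq_abs t, sq_abs y, abs_nonneg t, abs_nonneg x]
  calc (1 + t ^ 2) ^ (γ / 2) ≤ (4 * (1 + y ^ 2)) ^ (γ / 2) :=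
        Real.rpow_le_rpow (by positivity) ht2 (by positivity)
    _ = 2 ^ γ * (1 + y ^ 2) ^ (γ / 2) := by
        rw [Real.mul_rpow (by norm_num) (by positivity), show (4 : ℝ) = 2 ^ (2 : ℝ) by norm_num,
          ← Real.rpow_mul (by norm_num)]
        ring_nf
    _ ≤ 2 ^ γ * ((1 + x ^ 2) ^ (γ / 2) + (1 + y ^ 2) ^ (γ / 2)) := by
        gcongr
        exact le_add_of_nonneg_left (by positivity)

/-- Mean value theorem for `t ↦ ⟨t⟩^γ t`: on the segment between `x` and `x + y`,
`|t| ≤ |x| + |y|`. -/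
theorem abs_one_add_sq_rpow_mul_sub_le (hγ : 0 ≤ γ) (x y : ℝ) :
    |(1 + (x + y) ^ 2) ^ (γ / 2) * (x + y) - (1 + x ^ 2) ^ (γ / 2) * x|
      ≤ (1 + γ) * 2 ^ γ * |y| * ((1 + x ^ 2) ^ (γ / 2) + (1 + y ^ 2) ^ (γ / 2)) := by
  have hbound : ∀ t ∈ Set.uIcc x (x + y),
      ‖(1 + t ^ 2) ^ (γ / 2) + γ * t ^ 2 * (1 + t ^ 2) ^ (γ / 2 - 1)‖
        ≤ (1 + γ) * (2 ^ γ * ((1 + x ^ 2) ^ (γ / 2) + (1 + y ^ 2) ^ (γ / 2))) := by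
    intro t ht
    have ht' : |t| ≤ |x| + |y| := by
      rcases Set.mem_uIcc.mp ht with ⟨h₁, h₂⟩ | ⟨h₁, h₂⟩ <;>
        cases abs_cases x <;> cases abs_cases y <;> cases abs_cases t <;> linarith
    rw [Real.norm_eq_abs]
    exact (one_add_sq_rpow_deriv_le hγ t).trans
      (by gcongr; exact one_add_sq_rpow_le_of_abs_le hγ ht')
  have h := (convex_uIcc x (x + y)).norm_image_sub_le_of_norm_hasDerivWithin_le
    (fun t _ => (hasDerivAt_one_add_sq_rpow_mul_self γ t).hasDerivWithinAt) hbound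
    Set.left_mem_uIcc Set.right_mem_uIcc
  rw [Real.norm_eq_abs, Real.norm_eq_abs, add_sub_cancel_left] at h
  linarith

theorem abs_jb_mul_sub_le (hγ : 0 ≤ γ) (ξ ξ₁ : ℤ) :
    |jb γ ξ * ξ - jb γ ξ₁ * ξ₁|
      ≤ (1 + γ) * 2 ^ γ * |((ξ - ξ₁ : ℤ) : ℝ)| * (jb γ ξ₁ + jb γ (ξ - ξ₁)) := by
  have h := abs_one_add_sq_rpow_mul_sub_le hγ (ξ₁ : ℝ) ((ξ - ξ₁ : ℤ) : ℝ)
  rwa [Int.cast_sub, add_sub_cancel, ← Int.cast_sub] at h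

end SymbolBound

section SquareSummable

variable {ι : Type*} {a b : ι → ℝ}

theorem summable_mul_and_tsum_mul_le_sqrt (ha0 : ∀ i, 0 ≤ a i) (hb0 : ∀ i, 0 ≤ b i)
    (ha : Summable fun i => a i ^ 2) (hb : Summable fun i => b i ^ 2) :
    (Summable fun i => a i * b i) ∧
      ∑' i, a i * b i ≤ √(∑' i, a i ^ 2) * √(∑' i, b i ^ 2) := by
  simp only [Real.sqrt_eq_rpow, ← Real.rpow_two] at *
  exact Real.summable_and_inner_le_Lp_mul_Lq_tsum_of_nonneg .two_two ha0 hb0 ha hb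

theorem summable_add_sq_and_sqrt_tsum_add_sq_le (ha0 : ∀ i, 0 ≤ a i) (hb0 : ∀ i, 0 ≤ b i)
    (ha : Summable fun i => a i ^ 2) (hb : Summable fun i => b i ^ 2) :
    (Summable fun i => (a i + b i) ^ 2) ∧
      √(∑' i, (a i + b i) ^ 2) ≤ √(∑' i, a i ^ 2) + √(∑' i, b i ^ 2) := by
  simp only [Real.sqrt_eq_rpow, ← Real.rpow_two] at *
  exact Real.Lp_add_le_tsum_of_nonneg one_le_two ha0 hb0 ha hb

theorem summable_sq_and_sqrt_tsum_sq_le_of_le (ha0 : ∀ i, 0 ≤ a i) (hab : ∀ i, a i ≤ b i)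
    (hb : Summable fun i => b i ^ 2) :
    (Summable fun i => a i ^ 2) ∧ √(∑' i, a i ^ 2) ≤ √(∑' i, b i ^ 2) := by
  have hle : ∀ i, a i ^ 2 ≤ b i ^ 2 := fun i => pow_le_pow_left₀ (ha0 i) (hab i) 2
  have ha : Summable fun i => a i ^ 2 := .of_nonneg_of_le (fun i => sq_nonneg _) hle hb
  exact ⟨ha, Real.sqrt_le_sqrt (ha.tsum_le_tsum hle hb)⟩

theorem sqrt_tsum_mul_sq (c : ℝ) (hc : 0 ≤ c) (a : ι → ℝ) :
    √(∑' i, (c * a i) ^ 2) = c * √(∑' i, a i ^ 2) := by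
  simp only [mul_pow, tsum_mul_left, Real.sqrt_mul (sq_nonneg c), Real.sqrt_sq hc]

end SquareSummable

section DiscreteConvolution

def discreteConv (a b : ℤ → ℝ) (ξ : ℤ) : ℝ := ∑' n, a n * b (ξ - n)

variable {a b : ℤ → ℝ}

theorem summable_mul_sub_comm (a b : ℤ → ℝ) (ξ : ℤ) :
    (Summable fun n => a n * b (ξ - n)) ↔ Summable fun n => b n * a (ξ - n) := by
  rw [← (Equiv.subLeft ξ).summable_iff]
  simp [Function.comp_def, mul_comm]

theorem discreteConv_comm (a b : ℤ → ℝ) (ξ : ℤ) : discreteConv a b ξ = discreteConv b a ξ := by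
  rw [discreteConv, ← (Equiv.subLeft ξ).tsum_eq]
  simp [discreteConv, mul_comm]

theorem discreteConv_nonneg (ha0 : ∀ n, 0 ≤ a n) (hb0 : ∀ n, 0 ≤ b n) (ξ : ℤ) :
    0 ≤ discreteConv a b ξ :=
  tsum_nonneg fun n => mul_nonneg (ha0 n) (hb0 _)

/-- Cauchy–Schwarz against the weight `b (ξ - ·)`, splitting `a n b (ξ - n)` as
`(a n √b(ξ - n)) · √b(ξ - n)`. -/
theorem summable_mul_sub_and_sq_discreteConv_le (ha0 : ∀ n, 0 ≤ a n) (hb0 : ∀ n, 0 ≤ b n)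
    (hb : Summable b) (ξ : ℤ) (hab : Summable fun n => a n ^ 2 * b (ξ - n)) :
    (Summable fun n => a n * b (ξ - n)) ∧
      discreteConv a b ξ ^ 2 ≤ (∑' n, a n ^ 2 * b (ξ - n)) * ∑' n, b n := by
  have hsq : ∀ n, √(b (ξ - n)) ^ 2 = b (ξ - n) := fun n => Real.sq_sqrt (hb0 _)
  have hsplit : ∀ n, a n * √(b (ξ - n)) * √(b (ξ - n)) = a n * b (ξ - n) := fun n => by
    rw [mul_assoc, Real.mul_self_sqrt (hb0 _)]
  have hshift : Summable fun n => b (ξ - n) := (Equiv.subLeft ξ).summable_iff.mpr hb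
  obtain ⟨hsum, hle⟩ := summable_mul_and_tsum_mul_le_sqrt
    (a := fun n => a n * √(b (ξ - n))) (b := fun n => √(b (ξ - n)))
    (fun n => mul_nonneg (ha0 n) (Real.sqrt_nonneg _)) (fun n => Real.sqrt_nonneg _)
    (by simpa only [mul_pow, hsq] using hab) (by simpa only [hsq] using hshift)
  simp only [hsplit, mul_pow, hsq] at hsum hle
  rw [show ∑' n, b (ξ - n) = ∑' n, b n from (Equiv.subLeft ξ).tsum_eq b] at hle
  refine ⟨hsum, ?_⟩
  calc discreteConv a b ξ ^ 2
      ≤ (√(∑' n, a n ^ 2 * b (ξ - n)) * √(∑' n, b n)) ^ 2 :=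
        pow_le_pow_left₀ (discreteConv_nonneg ha0 hb0 ξ) hle 2
    _ = (∑' n, a n ^ 2 * b (ξ - n)) * ∑' n, b n := by
        rw [mul_pow, Real.sq_sqrt (tsum_nonneg fun n => mul_nonneg (sq_nonneg _) (hb0 _)),
          Real.sq_sqrt (tsum_nonneg hb0)]

/-- The shear `(ξ, n) ↦ (n, ξ - n)` turns this family into the product `a n ^ 2 * b m`. -/
theorem summable_sq_mul_sub_and_tsum_eq (hb0 : ∀ n, 0 ≤ b n)
    (ha : Summable fun n => a n ^ 2) (hb : Summable b) :
    (Summable fun p : ℤ × ℤ => a p.2 ^ 2 * b (p.1 - p.2)) ∧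
      ∑' p : ℤ × ℤ, a p.2 ^ 2 * b (p.1 - p.2) = (∑' n, a n ^ 2) * ∑' n, b n := by
  let shear : ℤ × ℤ ≃ ℤ × ℤ :=
    { toFun := fun p => (p.2, p.1 - p.2), invFun := fun q => (q.1 + q.2, q.1),
      left_inv := fun p => by simp, right_inv := fun q => by simp }
  have hprod : Summable fun q : ℤ × ℤ => a q.1 ^ 2 * b q.2 :=
    ha.mul_of_nonneg hb (fun n => sq_nonneg _) hb0
  refine ⟨shear.summable_iff.mpr hprod, ?_⟩
  rw [ha.tsum_mul_tsum hb hprod]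
  exact shear.tsum_eq fun q => a q.1 ^ 2 * b q.2

theorem summable_discreteConv_sq_and_sqrt_tsum_le (ha0 : ∀ n, 0 ≤ a n) (hb0 : ∀ n, 0 ≤ b n)
    (ha : Summable fun n => a n ^ 2) (hb : Summable b) :
    (∀ ξ, Summable fun n => a n * b (ξ - n)) ∧ (Summable fun ξ => discreteConv a b ξ ^ 2) ∧
      √(∑' ξ, discreteConv a b ξ ^ 2) ≤ √(∑' n, a n ^ 2) * ∑' n, b n := by
  obtain ⟨hF, hFsum⟩ := summable_sq_mul_sub_and_tsum_eq hb0 ha hb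
  have hpt := fun ξ => summable_mul_sub_and_sq_discreteConv_le ha0 hb0 hb ξ (hF.prod_factor ξ)
  have hmaj : Summable fun ξ => (∑' n, a n ^ 2 * b (ξ - n)) * ∑' n, b n :=
    hF.prod.mul_right _
  have hconv : Summable fun ξ => discreteConv a b ξ ^ 2 :=
    .of_nonneg_of_le (fun ξ => sq_nonneg _) (fun ξ => (hpt ξ).2) hmaj
  refine ⟨fun ξ => (hpt ξ).1, hconv, ?_⟩
  calc √(∑' ξ, discreteConv a b ξ ^ 2)
      ≤ √(∑' ξ, (∑' n, a n ^ 2 * b (ξ - n)) * ∑' n, b n) :=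
        Real.sqrt_le_sqrt (hconv.tsum_le_tsum (fun ξ => (hpt ξ).2) hmaj)
    _ = √(∑' n, a n ^ 2) * ∑' n, b n := by
        rw [tsum_mul_right, ← hF.tsum_prod, hFsum, mul_assoc, ← sq,
          Real.sqrt_mul (tsum_nonneg fun n => sq_nonneg _), Real.sqrt_sq (tsum_nonneg hb0)]

end DiscreteConvolution

section SobolevWeight

theorem jb_pos (s : ℝ) (n : ℤ) : 0 < jb s n :=
  Real.rpow_pos_of_pos (by positivity) _

theorem jb_mul_sq (s : ℝ) (n : ℤ) (x : ℝ) :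
    (jb s n * x) ^ 2 = (1 + (n : ℝ) ^ 2) ^ s * x ^ 2 := by
  rw [mul_pow, jb, ← Real.rpow_natCast, ← Real.rpow_mul (by positivity)]
  norm_num

theorem jb_neg_mul_jb (s : ℝ) (n : ℤ) : jb (-s) n * jb s n = 1 := by
  rw [jb, jb, ← Real.rpow_add (by positivity)]
  norm_num [neg_div]

theorem abs_mul_jb_le (s : ℝ) (n : ℤ) : |(n : ℝ)| * jb s n ≤ jb (s + 1) n := by
  rw [jb, jb, add_div, Real.rpow_add (by positivity), mul_comm, ← Real.sqrt_eq_rpow]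
  gcongr
  exact Real.abs_le_sqrt (by linarith)

theorem summable_one_add_sq_rpow_neg {s : ℝ} (hs : 1 / 2 < s) :
    Summable fun n : ℤ => (1 + (n : ℝ) ^ 2) ^ (-s) := by
  refine (Real.summable_abs_int_rpow (b := 2 * s) (by linarith)).of_norm_bounded_eventually ?_
  filter_upwards [Filter.eventually_cofinite_ne 0] with n hn
  have hn' : (n : ℝ) ≠ 0 := Int.cast_ne_zero.mpr hn
  rw [Real.norm_of_nonneg (by positivity)]
  calc (1 + (n : ℝ) ^ 2) ^ (-s) ≤ ((n : ℝ) ^ 2) ^ (-s) :=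
        Real.rpow_le_rpow_of_nonpos (by positivity) (by linarith) (by linarith)
    _ = |(n : ℝ)| ^ (-(2 * s)) := by
        rw [← sq_abs, ← Real.rpow_natCast, ← Real.rpow_mul (abs_nonneg _)]
        ring_nf

theorem summable_and_tsum_le_of_summable_jb_mul_sq {s : ℝ} (hs : 1 / 2 < s) {c : ℤ → ℝ}
    (hc0 : ∀ n, 0 ≤ c n) (hc : Summable fun n => (jb s n * c n) ^ 2) :
    Summable c ∧
      ∑' n, c n ≤ √(∑' n : ℤ, (1 + (n : ℝ) ^ 2) ^ (-s)) * √(∑' n, (jb s n * c n) ^ 2) := by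
  have hfac : ∀ n, jb (-s) n * (jb s n * c n) = c n := fun n => by
    rw [← mul_assoc, jb_neg_mul_jb, one_mul]
  have hjb : ∀ n, jb (-s) n ^ 2 = (1 + (n : ℝ) ^ 2) ^ (-s) := fun n => by
    simpa using jb_mul_sq (-s) n 1
  obtain ⟨hsum, hle⟩ := summable_mul_and_tsum_mul_le_sqrt (a := jb (-s))
    (b := fun n => jb s n * c n) (fun n => (jb_pos _ n).le)
    (fun n => mul_nonneg (jb_pos s n).le (hc0 n))
    (by simpa only [hjb] using summable_one_add_sq_rpow_neg hs) hc
  simp only [hfac, hjb] at hsum hle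
  exact ⟨hsum, hle⟩

end SobolevWeight

theorem sqrt_tsum_sq_le_of_le_discreteConv_add {K : ℝ} (hK : 0 ≤ K) {T u v a w : ℤ → ℝ}
    (hT0 : ∀ ξ, 0 ≤ T ξ) (hT : ∀ ξ, T ξ ≤ K * (discreteConv u v ξ + discreteConv a w ξ))
    (hu0 : ∀ n, 0 ≤ u n) (hv0 : ∀ n, 0 ≤ v n) (ha0 : ∀ n, 0 ≤ a n) (hw0 : ∀ n, 0 ≤ w n)
    (hu : Summable fun n => u n ^ 2) (hv : Summable v) (ha : Summable a)
    (hw : Summable fun n => w n ^ 2) :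
    √(∑' ξ, T ξ ^ 2) ≤ K * (√(∑' n, u n ^ 2) * ∑' n, v n + (∑' n, a n) * √(∑' n, w n ^ 2)) := by
  obtain ⟨-, huv, huv_le⟩ := summable_discreteConv_sq_and_sqrt_tsum_le hu0 hv0 hu hv
  obtain ⟨-, hwa, hwa_le⟩ := summable_discreteConv_sq_and_sqrt_tsum_le hw0 ha0 hw ha
  simp only [← discreteConv_comm a w] at hwa hwa_le
  obtain ⟨hsum, hmink⟩ := summable_add_sq_and_sqrt_tsum_add_sq_le
    (discreteConv_nonneg hu0 hv0) (discreteConv_nonneg ha0 hw0) huv hwa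
  have hKsum : Summable fun ξ => (K * (discreteConv u v ξ + discreteConv a w ξ)) ^ 2 := by
    simpa only [mul_pow] using hsum.mul_left (K ^ 2)
  calc √(∑' ξ, T ξ ^ 2)
      ≤ √(∑' ξ, (K * (discreteConv u v ξ + discreteConv a w ξ)) ^ 2) :=
        (summable_sq_and_sqrt_tsum_sq_le_of_le hT0 hT hKsum).2
    _ = K * √(∑' ξ, (discreteConv u v ξ + discreteConv a w ξ) ^ 2) := sqrt_tsum_mul_sq K hK _
    _ ≤ K * (√(∑' n, u n ^ 2) * ∑' n, v n + (∑' n, a n) * √(∑' n, w n ^ 2)) := by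
        gcongr
        linarith

section Commutator

def commutatorCoeff (γ : ℝ) (F G : ℤ → ℂ) (ξ : ℤ) : ℂ :=
  ∑' ξ₁ : ℤ, Complex.I * ((jb γ ξ * (ξ : ℝ) - jb γ ξ₁ * (ξ₁ : ℝ) : ℝ) : ℂ) * F ξ₁ * G (ξ - ξ₁)

def hnormSeq (s : ℝ) (F : ℤ → ℂ) : ℝ :=
  √(∑' n : ℤ, (1 + (n : ℝ) ^ 2) ^ s * ‖F n‖ ^ 2)

variable {γ : ℝ}

theorem norm_commutatorCoeff_term_le (hγ : 0 ≤ γ) (F G : ℤ → ℂ) (ξ ξ₁ : ℤ) :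
    ‖Complex.I * ((jb γ ξ * (ξ : ℝ) - jb γ ξ₁ * (ξ₁ : ℝ) : ℝ) : ℂ) * F ξ₁ * G (ξ - ξ₁)‖ ≤
      (1 + γ) * 2 ^ γ * (jb γ ξ₁ * ‖F ξ₁‖ * (|((ξ - ξ₁ : ℤ) : ℝ)| * ‖G (ξ - ξ₁)‖) +
        ‖F ξ₁‖ * (|((ξ - ξ₁ : ℤ) : ℝ)| * jb γ (ξ - ξ₁) * ‖G (ξ - ξ₁)‖)) := by
  rw [norm_mul, norm_mul, norm_mul, Complex.norm_I, one_mul, Complex.norm_real,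
    Real.norm_eq_abs]
  calc |jb γ ξ * ξ - jb γ ξ₁ * ξ₁| * ‖F ξ₁‖ * ‖G (ξ - ξ₁)‖
      ≤ (1 + γ) * 2 ^ γ * |((ξ - ξ₁ : ℤ) : ℝ)| * (jb γ ξ₁ + jb γ (ξ - ξ₁)) * ‖F ξ₁‖ *
          ‖G (ξ - ξ₁)‖ := by
        gcongr
        exact abs_jb_mul_sub_le hγ ξ ξ₁
    _ = _ := by ring

theorem norm_commutatorCoeff_le (hγ : 0 ≤ γ) (F G : ℤ → ℂ) (ξ : ℤ)
    (h₁ : Summable fun n => jb γ n * ‖F n‖ * (|((ξ - n : ℤ) : ℝ)| * ‖G (ξ - n)‖))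
    (h₂ : Summable fun n => ‖F n‖ * (|((ξ - n : ℤ) : ℝ)| * jb γ (ξ - n) * ‖G (ξ - n)‖)) :
    ‖commutatorCoeff γ F G ξ‖ ≤ (1 + γ) * 2 ^ γ *
      (discreteConv (fun n => jb γ n * ‖F n‖) (fun n => |(n : ℝ)| * ‖G n‖) ξ +
        discreteConv (fun n => ‖F n‖) (fun n => |(n : ℝ)| * jb γ n * ‖G n‖) ξ) :=
  tsum_of_norm_bounded ((h₁.hasSum.add h₂.hasSum).mul_left _)
    (norm_commutatorCoeff_term_le hγ F G ξ)

theorem sqrt_tsum_norm_commutatorCoeff_sq_le {γ₁ : ℝ} (hγ : 0 ≤ γ) (hγ₁ : 1 / 2 < γ₁)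
    {F G : ℤ → ℂ} (hF : Summable fun n : ℤ => (1 + (n : ℝ) ^ 2) ^ γ * ‖F n‖ ^ 2)
    (hF₁ : Summable fun n : ℤ => (1 + (n : ℝ) ^ 2) ^ γ₁ * ‖F n‖ ^ 2)
    (hG : Summable fun n : ℤ => (1 + (n : ℝ) ^ 2) ^ (γ + 1) * ‖G n‖ ^ 2)
    (hG₁ : Summable fun n : ℤ => (1 + (n : ℝ) ^ 2) ^ (γ₁ + 1) * ‖G n‖ ^ 2) :
    √(∑' ξ, ‖commutatorCoeff γ F G ξ‖ ^ 2) ≤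
      (1 + γ) * 2 ^ γ * √(∑' n : ℤ, (1 + (n : ℝ) ^ 2) ^ (-γ₁)) *
        (hnormSeq γ F * hnormSeq (γ₁ + 1) G + hnormSeq γ₁ F * hnormSeq (γ + 1) G) := by
  simp only [hnormSeq, ← jb_mul_sq] at hF hF₁ hG hG₁ ⊢
  set S := ∑' n : ℤ, (1 + (n : ℝ) ^ 2) ^ (-γ₁)
  have hjb : ∀ s n, 0 < jb s n := jb_pos
  obtain ⟨hA, hA_le⟩ := summable_and_tsum_le_of_summable_jb_mul_sq hγ₁ (fun n => norm_nonneg _) hF₁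
  have hv : Summable (fun n : ℤ => |(n : ℝ)| * ‖G n‖) ∧
      ∑' n : ℤ, |(n : ℝ)| * ‖G n‖ ≤ √S * √(∑' n, (jb (γ₁ + 1) n * ‖G n‖) ^ 2) := by
    obtain ⟨hsum, hle⟩ := summable_sq_and_sqrt_tsum_sq_le_of_le
      (a := fun n => jb γ₁ n * (|(n : ℝ)| * ‖G n‖)) (fun n => by have := hjb γ₁ n; positivity)
      (fun n => by rw [← mul_assoc, mul_comm (jb γ₁ n)]; gcongr; exact abs_mul_jb_le γ₁ n) hG₁
    obtain ⟨hv, hv_le⟩ := summable_and_tsum_le_of_summable_jb_mul_sq hγ₁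
      (fun n => by positivity) hsum
    exact ⟨hv, hv_le.trans (by gcongr)⟩
  obtain ⟨hw, hw_le⟩ := summable_sq_and_sqrt_tsum_sq_le_of_le
    (a := fun n : ℤ => |(n : ℝ)| * jb γ n * ‖G n‖) (fun n => by have := hjb γ n; positivity)
    (fun n => by gcongr; exact abs_mul_jb_le γ n) hG
  obtain ⟨h₁, -, -⟩ := summable_discreteConv_sq_and_sqrt_tsum_le
    (fun n => by have := hjb γ n; positivity) (fun n => by positivity) hF hv.1
  obtain ⟨h₂, -, -⟩ := summable_discreteConv_sq_and_sqrt_tsum_le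
    (fun n => by have := hjb γ n; positivity) (fun n => norm_nonneg _) hw hA
  have h₂' : ∀ ξ, Summable fun n =>
      ‖F n‖ * (|((ξ - n : ℤ) : ℝ)| * jb γ (ξ - n) * ‖G (ξ - n)‖) := fun ξ =>
    (summable_mul_sub_comm (fun n => ‖F n‖) (fun n => |(n : ℝ)| * jb γ n * ‖G n‖) ξ).mpr (h₂ ξ)
  calc √(∑' ξ, ‖commutatorCoeff γ F G ξ‖ ^ 2)
      ≤ (1 + γ) * 2 ^ γ * (√(∑' n, (jb γ n * ‖F n‖) ^ 2) * ∑' n : ℤ, |(n : ℝ)| * ‖G n‖ +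
          (∑' n, ‖F n‖) * √(∑' n : ℤ, (|(n : ℝ)| * jb γ n * ‖G n‖) ^ 2)) := by
        refine sqrt_tsum_sq_le_of_le_discreteConv_add (by positivity) (fun ξ => norm_nonneg _)
          (fun ξ => norm_commutatorCoeff_le hγ F G ξ (h₁ ξ) (h₂' ξ))
          (fun n => ?_) (fun n => by positivity) (fun n => norm_nonneg _) (fun n => ?_)
          hF hv.1 hA hw
        all_goals have := hjb γ n; positivity
    _ ≤ (1 + γ) * 2 ^ γ * (√(∑' n, (jb γ n * ‖F n‖) ^ 2) *
          (√S * √(∑' n, (jb (γ₁ + 1) n * ‖G n‖) ^ 2)) +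
          √S * √(∑' n, (jb γ₁ n * ‖F n‖) ^ 2) * √(∑' n, (jb (γ + 1) n * ‖G n‖) ^ 2)) := by
        gcongr
        exact hv.2
    _ = _ := by ring

end Commutator

/-- By Parseval for the normalized Haar measure, the left-hand side is `‖[J^γ ∂ₓ, g] f‖_{L²}`
written as the `ℓ²` norm of `commutatorCoeff γ f̂ ĝ`. -/
theorem stmt15 (γ γ₁ : ℝ) (hγ : 0 ≤ γ) (hγ₁ : 1 / 2 < γ₁) : ∃ C : ℝ, 0 < C ∧
    ∀ f g : AddCircle (2 * Real.pi) → ℂ,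
      memH γ f → memH γ₁ f → memH (γ + 1) g → memH (γ₁ + 1) g →
      Real.sqrt (∑' ξ : ℤ,
          ‖∑' ξ₁ : ℤ, Complex.I * ((jb γ ξ * (ξ : ℝ) - jb γ ξ₁ * (ξ₁ : ℝ) : ℝ) : ℂ) *
              fourierCoeff f ξ₁ * fourierCoeff g (ξ - ξ₁)‖ ^ 2)
        ≤ C * (hnorm γ f * hnorm (γ₁ + 1) g + hnorm γ₁ f * hnorm (γ + 1) g) := by
  have hS : 0 < ∑' n : ℤ, (1 + (n : ℝ) ^ 2) ^ (-γ₁) :=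
    (summable_one_add_sq_rpow_neg hγ₁).tsum_pos (fun n => by positivity) 0 (by positivity)
  refine ⟨(1 + γ) * 2 ^ γ * √(∑' n : ℤ, (1 + (n : ℝ) ^ 2) ^ (-γ₁)), by positivity, ?_⟩
  intro f g hfγ hfγ₁ hgγ hgγ₁
  exact sqrt_tsum_norm_commutatorCoeff_sq_le hγ hγ₁ hfγ.2 hfγ₁.2 hgγ.2 hgγ₁.2
end
end
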